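/- Let O be an order in a number field K containing O_{K₀} (K/K₀ quadratic), with conductor f, and let p be a prime ideal of O_{K₀} not dividing f. Let z ∈ K be a root of A X² + B X + C ∈ O_{K₀}[X] with p not dividing gcd(A,B,C), such that z O_{K₀} + O_{K₀} has multiplier ring O. Set U(X) = X² + BX + AC with root θ = Az. If p is ramified in O_K (i.e., p O_K = P² for a prime P of O_K), then the remainder of U upon division by a monic linear lift U₁ of the repeated factor of U mod p is an element of O_{K₀} not divisible by p²; in particular U has no root in O_{K₀}/p². -/

import Mathlib

/-!
`θ = A z` is integral with `U(θ) = 0`, and `U(u) = -(θ - u)(θ + u + B)`. Both factors lie in `P`,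
because `(θ - u)² ≡ 0` and `B + 2u ≡ 0 mod p`, and they differ by an element of `p ⊆ P²`; so if
`θ - u ∉ P² = p 𝓞_K`, both have `P`-adic valuation one and `U(u) ∉ p²`. That `θ - u ∉ p 𝓞_K` is
where coprimality to the conductor enters: for `x ∉ p` with `x 𝓞_K` inside the multiplier ring of
`b = z 𝓞_{K₀} + 𝓞_{K₀}`, the products `x (θ - u) · 1` and `x (θ - u) · z` would lie in `p b`, and
their coordinates in the basis `z, 1` would put `A`, `B`, `C` in `p`. Finally, a root of `U`
modulo `p²` is congruent to `u` modulo `p`, and then `U(x) ≡ U(u) mod p²`.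
-/

namespace Ideal

variable {R : Type*} [CommRing R] [IsDedekindDomain R]

theorem mul_notMem_pow_three {P : Ideal R} [hP : P.IsPrime] {a b : R}
    (ha : a ∈ P) (ha₂ : a ∉ P ^ 2) (hb : b ∈ P) (hb₂ : b ∉ P ^ 2) : a * b ∉ P ^ 3 := by
  rcases eq_or_ne P ⊥ with rfl | hP₀
  · simp_all
  rw [← dvd_span_singleton] at ha ha₂ hb hb₂ ⊢
  rw [← span_singleton_mul_span_singleton]
  intro hab
  rcases succ_dvd_or_succ_dvd_of_succ_sum_dvd_mul (k := 1) (l := 1) (prime_of_isPrime hP₀ hP)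
    (by simpa using ha) (by simpa using hb) hab with h | h
  exacts [ha₂ h, hb₂ h]

end Ideal

namespace Submodule

variable {R M : Type*} [CommRing R] [AddCommGroup M] [Module R M]

theorem exists_smul_add_smul_eq_of_mem_ideal_smul_span_pair {I : Ideal R} {x y w : M}
    (hw : w ∈ I • span R {x, y}) : ∃ a ∈ I, ∃ b ∈ I, a • x + b • y = w := by
  induction hw using smul_induction_on' with
  | smul r hr n hn =>
    obtain ⟨c, d, rfl⟩ := mem_span_pair.mp hn
    exact ⟨r * c, I.mul_mem_right _ hr, r * d, I.mul_mem_right _ hr, by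
      simp only [smul_add, mul_smul]⟩
  | add w₁ _ w₂ _ h₁ h₂ =>
    obtain ⟨a₁, ha₁, b₁, hb₁, rfl⟩ := h₁
    obtain ⟨a₂, ha₂, b₂, hb₂, rfl⟩ := h₂
    exact ⟨a₁ + a₂, add_mem ha₁ ha₂, b₁ + b₂, add_mem hb₁ hb₂, by module⟩

theorem smul_add_smul_mem_ideal_smul_span_pair_iff {I : Ideal R} {x y : M}
    (hxy : LinearIndependent R ![x, y]) {a b : R} :
    a • x + b • y ∈ I • span R {x, y} ↔ a ∈ I ∧ b ∈ I := by
  refine ⟨fun h => ?_, fun ⟨ha, hb⟩ => add_mem (smul_mem_smul ha (subset_span (by simp)))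
    (smul_mem_smul hb (subset_span (by simp)))⟩
  obtain ⟨a', ha', b', hb', hab⟩ := exists_smul_add_smul_eq_of_mem_ideal_smul_span_pair h
  obtain ⟨h₁, h₂⟩ := LinearIndependent.pair_iff.mp hxy (a' - a) (b' - b) (by
    rw [sub_smul, sub_smul, sub_add_sub_comm, hab, sub_self])
  rw [sub_eq_zero] at h₁ h₂
  exact ⟨h₁ ▸ ha', h₂ ▸ hb'⟩

end Submodule

theorem linearIndependent_pair_one_of_notMem_range {R F L : Type*} [CommRing R] [Field F]
    [CommRing L] [Nontrivial L] [Algebra R F] [Algebra F L] [Algebra R L] [IsScalarTower R F L]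
    [FaithfulSMul R F] {z : L} (hz : z ∉ (algebraMap F L).range) :
    LinearIndependent R ![z, 1] := by
  refine .restrict_scalars' R (LinearIndependent.pair_iff (R := F).mpr fun s t hst => ?_)
  have hs : s = 0 := by
    by_contra hs
    refine hz ⟨-(t / s), ?_⟩
    rw [Algebra.algebraMap_eq_smul_one, ← inv_smul_smul₀ hs z, eq_neg_of_add_eq_zero_left hst,
      smul_neg, smul_smul, neg_smul, div_eq_inv_mul]
  subst hs
  simpa using hst

section Conductor

variable {R S L : Type*} [CommRing R] [CommRing S] [CommRing L] [Algebra R S] [Algebra R L]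
  [Algebra S L] [IsScalarTower R S L]

theorem mul_mem_ideal_smul_of_mem_map {N : Submodule R L} {x : R}
    (hx : ∀ y : S, ∀ w ∈ N, algebraMap R L x * algebraMap S L y * w ∈ N)
    {p : Ideal R} {t : S} (ht : t ∈ p.map (algebraMap R S)) {w : L} (hw : w ∈ N) :
    algebraMap R L x * algebraMap S L t * w ∈ p • N := by
  replace ht : t ∈ p • (⊤ : Submodule R S) := by rwa [Ideal.smul_top_eq_map]
  induction ht using Submodule.smul_induction_on' generalizing w with
  | smul r hr y _ =>
    have : algebraMap R L x * algebraMap S L (r • y) * w =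
        r • (algebraMap R L x * algebraMap S L y * w) := by
      rw [Algebra.smul_def r y, map_mul, ← IsScalarTower.algebraMap_apply, Algebra.smul_def]
      ring
    exact this ▸ Submodule.smul_mem_smul hr (hx y w hw)
  | add y₁ _ y₂ _ h₁ h₂ =>
    rw [map_add, mul_add, add_mul]
    exact add_mem (h₁ hw) (h₂ hw)

theorem sub_algebraMap_notMem_map {z : L} (hz : LinearIndependent R ![z, 1]) {A B C : R}
    (hroot : algebraMap R L A * z ^ 2 + algebraMap R L B * z + algebraMap R L C = 0)
    {p : Ideal R} [hp : p.IsPrime] (hgcd : ¬ Ideal.span {A, B, C} ≤ p)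
    (hcop : ∃ x ∉ p, ∀ y : S, ∀ w ∈ Submodule.span R {z, 1},
      algebraMap R L x * algebraMap S L y * w ∈ Submodule.span R {z, 1})
    {θ : S} (hθ : algebraMap S L θ = algebraMap R L A * z) (u : R) :
    θ - algebraMap R S u ∉ p.map (algebraMap R S) := by
  obtain ⟨x, hxp, hx⟩ := hcop
  have cancel : ∀ r, x * r ∈ p → r ∈ p := fun r h => (hp.mem_or_mem h).resolve_left hxp
  intro ht
  have hθu : algebraMap S L (θ - algebraMap R S u) = algebraMap R L A * z - algebraMap R L u := by
    rw [map_sub, hθ, ← IsScalarTower.algebraMap_apply]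
  have h₁ : (x * A) • z + (-(x * u)) • (1 : L) ∈ p • Submodule.span R {z, 1} := by
    convert mul_mem_ideal_smul_of_mem_map hx ht (Submodule.subset_span (by simp : (1 : L) ∈ _))
      using 1
    simp only [hθu, Algebra.smul_def, map_mul, map_neg]
    ring
  have h₂ : (-(x * (B + u))) • z + (-(x * C)) • (1 : L) ∈ p • Submodule.span R {z, 1} := by
    convert mul_mem_ideal_smul_of_mem_map hx ht (Submodule.subset_span (by simp : z ∈ _))
      using 1
    simp only [hθu, Algebra.smul_def, map_mul, map_neg, map_add]
    linear_combination -algebraMap R L x * hroot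
  rw [Submodule.smul_add_smul_mem_ideal_smul_span_pair_iff hz, neg_mem_iff] at h₁
  rw [Submodule.smul_add_smul_mem_ideal_smul_span_pair_iff hz, neg_mem_iff, neg_mem_iff] at h₂
  have hu : u ∈ p := cancel u h₁.2
  refine hgcd (Ideal.span_le.mpr ?_)
  rintro _ (rfl | rfl | rfl)
  · exact cancel _ h₁.1
  · simpa using sub_mem (cancel _ h₂.1) hu
  · exact cancel _ h₂.2

end Conductor

theorem sq_add_mul_add_notMem_sq_of_sub_notMem_map {R S : Type*} [CommRing R] [CommRing S]
    [IsDedekindDomain S] (f : R →+* S) {p : Ideal R} {P : Ideal S} [hP : P.IsPrime]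
    (hpP : p.map f = P ^ 2) {b c u : R} {θ : S} (hθ : θ ^ 2 + f b * θ + f c = 0)
    (hb : b + 2 * u ∈ p) (hc : c - u ^ 2 ∈ p) (hθu : θ - f u ∉ p.map f) :
    u ^ 2 + b * u + c ∉ p ^ 2 := by
  have hbP : f (b + 2 * u) ∈ P ^ 2 := hpP ▸ Ideal.mem_map_of_mem f hb
  have ha₂ : θ - f u ∉ P ^ 2 := hpP ▸ hθu
  have ha : θ - f u ∈ P := by
    refine hP.mem_of_pow_mem 2 (Ideal.pow_le_self two_ne_zero (hpP ▸ ?_))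
    rw [show (θ - f u) ^ 2 = -(f (b + 2 * u) * θ) - f (c - u ^ 2) by
      simp only [map_add, map_mul, map_sub, map_pow, map_ofNat]; linear_combination hθ]
    exact sub_mem (neg_mem (Ideal.mul_mem_right _ _ (Ideal.mem_map_of_mem f hb)))
      (Ideal.mem_map_of_mem f hc)
  have hv₂ : θ - f u + f (b + 2 * u) ∉ P ^ 2 := fun h => ha₂ (by simpa using sub_mem h hbP)
  have hv : θ - f u + f (b + 2 * u) ∈ P := add_mem ha (Ideal.pow_le_self two_ne_zero hbP)
  intro hU
  refine Ideal.mul_notMem_pow_three ha ha₂ hv hv₂ ?_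
  rw [show (θ - f u) * (θ - f u + f (b + 2 * u)) = -f (u ^ 2 + b * u + c) by
    simp only [map_add, map_mul, map_pow, map_ofNat]; linear_combination hθ]
  refine neg_mem (Ideal.pow_le_pow_right (show 3 ≤ 2 * 2 by norm_num) ?_)
  rw [pow_mul, ← hpP, ← Ideal.map_pow]
  exact Ideal.mem_map_of_mem f hU

theorem sq_add_mul_add_mem_sq_of_mem_sq {R : Type*} [CommRing R] {p : Ideal R} [hp : p.IsPrime]
    {b c u x : R} (hb : b + 2 * u ∈ p) (hc : c - u ^ 2 ∈ p) (hx : x ^ 2 + b * x + c ∈ p ^ 2) :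
    u ^ 2 + b * u + c ∈ p ^ 2 := by
  have hxu : x - u ∈ p := hp.mem_of_pow_mem 2 <| by
    rw [show (x - u) ^ 2 = (x ^ 2 + b * x + c) - (b + 2 * u) * x - (c - u ^ 2) by ring]
    exact sub_mem (sub_mem (Ideal.pow_le_self two_ne_zero hx) (p.mul_mem_right _ hb)) hc
  rw [show u ^ 2 + b * u + c = (x ^ 2 + b * x + c) - (x - u) * (x - u + (b + 2 * u)) by ring]
  exact sub_mem hx (pow_two p ▸ Ideal.mul_mem_mul hxu (add_mem hxu hb))

theorem isIntegral_of_sq_add_mul_add_eq_zero {R L : Type*} [CommRing R] [CommRing L]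
    [Algebra R L] {b c : R} {x : L} (hx : x ^ 2 + algebraMap R L b * x + algebraMap R L c = 0) :
    IsIntegral R x :=
  ⟨.X ^ 2 + .C b * .X + .C c, by monicity!, by simpa [Polynomial.eval₂_add] using hx⟩

open NumberField

theorem kummer_dedekind_ramified_remainder_general
    (K₀ K : Type*) [Field K₀] [Field K] [NumberField K] [Algebra K₀ K]
    (z : K) (hz : z ∉ (algebraMap K₀ K).range)
    (A B C : 𝓞 K₀)
    (hroot : algebraMap (𝓞 K₀) K A * z ^ 2 + algebraMap (𝓞 K₀) K B * z +
      algebraMap (𝓞 K₀) K C = 0)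
    (p : Ideal (𝓞 K₀)) (hp : p.IsPrime)
    (hgcd : ¬ Ideal.span ({A, B, C} : Set (𝓞 K₀)) ≤ p)
    -- `p` is coprime to the conductor of the multiplier ring `O` of `b`:
    (hcop : ∃ x : 𝓞 K₀, x ∉ p ∧ ∀ y : 𝓞 K,
      ∀ w ∈ Submodule.span (𝓞 K₀) ({z, 1} : Set K),
        (algebraMap (𝓞 K₀) K x * algebraMap (𝓞 K) K y) * w ∈
          Submodule.span (𝓞 K₀) ({z, 1} : Set K))
    -- `p` is ramified in `𝓞 K`:
    (hram : ∃ P : Ideal (𝓞 K), P.IsPrime ∧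
      Ideal.map (algebraMap (𝓞 K₀) (𝓞 K)) p = P ^ 2)
    (u : 𝓞 K₀) (hu₁ : B + 2 * u ∈ p) (hu₂ : A * C - u ^ 2 ∈ p) :
    u ^ 2 + B * u + A * C ∉ p ^ 2 ∧
      ∀ x : 𝓞 K₀, x ^ 2 + B * x + A * C ∉ p ^ 2 := by
  obtain ⟨P, hP, hpP⟩ := hram
  have hθK : (algebraMap (𝓞 K₀) K A * z) ^ 2 + algebraMap (𝓞 K₀) K B *
      (algebraMap (𝓞 K₀) K A * z) + algebraMap (𝓞 K₀) K (A * C) = 0 := by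
    rw [map_mul]; linear_combination algebraMap (𝓞 K₀) K A * hroot
  let θ : 𝓞 K := ⟨_, isIntegral_trans _ (isIntegral_of_sq_add_mul_add_eq_zero hθK)⟩
  have hθ : θ ^ 2 + algebraMap (𝓞 K₀) (𝓞 K) B * θ + algebraMap (𝓞 K₀) (𝓞 K) (A * C) = 0 := by
    apply FaithfulSMul.algebraMap_injective (𝓞 K) K
    simp only [map_add, map_mul (algebraMap (𝓞 K) K) _ θ, map_pow, map_zero,
      ← IsScalarTower.algebraMap_apply]
    exact hθK
  have hθu := sub_algebraMap_notMem_map (linearIndependent_pair_one_of_notMem_range (F := K₀) hz)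
    hroot hgcd hcop (θ := θ) rfl u
  have hU := sq_add_mul_add_notMem_sq_of_sub_notMem_map _ hpP hθ hu₁ hu₂ hθu
  exact ⟨hU, fun x hx => hU (sq_add_mul_add_mem_sq_of_mem_sq hu₁ hu₂ hx)⟩

/-- Relative Kummer–Dedekind lemma, ramified case.  Let `O` be the multiplier ring of
`b = z 𝓞 K₀ + 𝓞 K₀` (an order of `K` containing `𝓞 K₀`), `p` a prime of `𝓞 K₀`
coprime to the conductor of `O` and not dividing `(A, B, C)`, where `z` is a root of
`A X² + B X + C`.  Put `U(X) = X² + B X + A C`.  If `p` is ramified in `𝓞 K` and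
`U ≡ (X - u)² (mod p)`, then the remainder `U(u) = u² + B u + A C` of `U` upon
division by `X - u` is not divisible by `p²`; in particular `U` has no root
modulo `p²`. -/
theorem kummer_dedekind_ramified_remainder
    (K₀ K : Type*) [Field K₀] [NumberField K₀] [Field K] [NumberField K] [Algebra K₀ K]
    (htr : ∀ v : InfinitePlace K₀, v.IsReal)
    (hti : ∀ v : InfinitePlace K, v.IsComplex)
    (h2 : Module.finrank K₀ K = 2)
    (z : K) (hz : z ∉ (algebraMap K₀ K).range)
    (A B C : 𝓞 K₀) (hA : A ≠ 0)
    (hroot : algebraMap (𝓞 K₀) K A * z ^ 2 + algebraMap (𝓞 K₀) K B * z +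
      algebraMap (𝓞 K₀) K C = 0)
    (p : Ideal (𝓞 K₀)) (hp : p.IsPrime) (hp0 : p ≠ ⊥)
    (hgcd : ¬ Ideal.span ({A, B, C} : Set (𝓞 K₀)) ≤ p)
    -- `p` is coprime to the conductor of the multiplier ring `O` of `b`:
    (hcop : ∃ x : 𝓞 K₀, x ∉ p ∧ ∀ y : 𝓞 K,
      ∀ w ∈ Submodule.span (𝓞 K₀) ({z, 1} : Set K),
        (algebraMap (𝓞 K₀) K x * algebraMap (𝓞 K) K y) * w ∈
          Submodule.span (𝓞 K₀) ({z, 1} : Set K))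
    -- `p` is ramified in `𝓞 K`:
    (hram : ∃ P : Ideal (𝓞 K), P.IsPrime ∧
      Ideal.map (algebraMap (𝓞 K₀) (𝓞 K)) p = P ^ 2)
    (u : 𝓞 K₀) (hu₁ : B + 2 * u ∈ p) (hu₂ : A * C - u ^ 2 ∈ p) :
    u ^ 2 + B * u + A * C ∉ p ^ 2 ∧
      ∀ x : 𝓞 K₀, x ^ 2 + B * x + A * C ∉ p ^ 2 :=
  kummer_dedekind_ramified_remainder_general K₀ K z hz A B C hroot p hp hgcd hcop hram u hu₁ hu₂
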